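/- Conditional dual representation: for each n ∈ {0,...,N}, the Snell envelope satisfies U_n = ess inf over square-integrable martingales M of E[max_{n ≤ j ≤ N} (Z_j - (M_j - M_n)) | F_n], and the essential infimum is attained by the Doob martingale M* of U, for which max_{n ≤ j ≤ N} (Z_j - (M*_j - M*_n)) = U_n almost surely. -/

import Mathlib

open MeasureTheory

private lemma integrable_finset_sup' {Ω : Type*} {m0 : MeasurableSpace Ω} {μ : Measure Ω}
    {ι : Type*} {s : Finset ι} (hne : s.Nonempty) {f : ι → Ω → ℝ}
    (hf : ∀ i ∈ s, Integrable (f i) μ) :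
    Integrable (fun ω => s.sup' hne (fun i => f i ω)) μ := by
  induction hne using Finset.Nonempty.cons_induction with
  | singleton i => simp only [Finset.sup'_singleton]; exact hf i (Finset.mem_singleton_self i)
  | cons a s ha hne ihs =>
    rw [Finset.forall_mem_cons] at hf
    simp only [Finset.sup'_cons, hne]
    exact hf.1.sup (ihs hf.2)

private lemma stronglyMeasurable_finset_sup' {Ω : Type*} {m : MeasurableSpace Ω}
    {ι : Type*} {s : Finset ι} (hne : s.Nonempty) {f : ι → Ω → ℝ}
    (hf : ∀ i ∈ s, StronglyMeasurable[m] (f i)) :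
    StronglyMeasurable[m] (fun ω => s.sup' hne (fun i => f i ω)) := by
  induction hne using Finset.Nonempty.cons_induction with
  | singleton i => simp only [Finset.sup'_singleton]; exact hf i (Finset.mem_singleton_self i)
  | cons a s ha hne ihs =>
    rw [Finset.forall_mem_cons] at hf
    simp only [Finset.sup'_cons, hne]
    exact hf.1.sup (ihs hf.2)

/-- Conditional dual representation: for each `n ≤ N`, the Snell envelope `U n` is a
lower bound (hence the essential infimum) of
`E[max_{n ≤ j ≤ N} (Z j - (M j - M n)) | ℱ n]` over square-integrable martingales `M`,
and the infimum is attained by the Doob martingale `Mstar` of `U`, for which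
`max_{n ≤ j ≤ N} (Z j - (Mstar j - Mstar n)) = U n` a.s. -/
theorem conditional_dual_representation
    {Ω : Type*} {m0 : MeasurableSpace Ω} {μ : Measure Ω} [IsProbabilityMeasure μ]
    (ℱ : Filtration ℕ m0) (N : ℕ) (Z U Mstar A : ℕ → Ω → ℝ)
    (hZadapted : Adapted ℱ Z) (hZ2 : ∀ n, MemLp (Z n) 2 μ)
    (hUN : ∀ ω, U N ω = Z N ω)
    (hUrec : ∀ n < N, ∀ ω, U n ω = max (Z n ω) ((μ[U (n + 1) | ℱ n]) ω))
    (hMstar : Martingale Mstar ℱ μ) (hMstar0 : ∀ ω, Mstar 0 ω = 0)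
    (hA0 : ∀ ω, A 0 ω = 0)
    (hApred : ∀ n, StronglyMeasurable[ℱ n] (A (n + 1)))
    (hAmono : ∀ n, ∀ᵐ ω ∂μ, A n ω ≤ A (n + 1) ω)
    (hMinc : ∀ n, (fun ω => Mstar (n + 1) ω - Mstar n ω)
      =ᵐ[μ] fun ω => U (n + 1) ω - (μ[U (n + 1) | ℱ n]) ω)
    (hDoob : ∀ n, ∀ᵐ ω ∂μ, U n ω = U 0 ω + Mstar n ω - A n ω) :
    ∀ n (hn : n ≤ N),
      (∀ M : ℕ → Ω → ℝ, Martingale M ℱ μ → (∀ k, MemLp (M k) 2 μ) →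
        U n ≤ᵐ[μ] μ[fun ω => (Finset.Icc n N).sup' (Finset.nonempty_Icc.mpr hn)
          (fun j => Z j ω - (M j ω - M n ω)) | ℱ n]) ∧
      (fun ω => (Finset.Icc n N).sup' (Finset.nonempty_Icc.mpr hn)
          (fun j => Z j ω - (Mstar j ω - Mstar n ω))) =ᵐ[μ] U n := by
  have hZint : ∀ k, Integrable (Z k) μ := fun k => (hZ2 k).integrable one_le_two
  have hZleU : ∀ j, j ≤ N → ∀ ω, Z j ω ≤ U j ω := by
    intro j hj ω
    rcases eq_or_lt_of_le hj with h | h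
    · subst h; rw [hUN]
    · rw [hUrec j h ω]; exact le_max_left _ _
  -- integrability of U by downward induction
  have hUintAux : ∀ d j, j ≤ N → N - j ≤ d → Integrable (U j) μ := by
    intro d
    induction d with
    | zero =>
      intro j hj hd
      have hjN : j = N := by omega
      rw [hjN, show U N = Z N from funext hUN]
      exact hZint N
    | succ d ih =>
      intro j hj hd
      rcases eq_or_lt_of_le hj with h | h
      · rw [h, show U N = Z N from funext hUN]
        exact hZint N
      · rw [show U j = fun ω => max (Z j ω) ((μ[U (j + 1) | ℱ j]) ω) from funext (hUrec j h)]
        exact (hZint j).sup integrable_condExp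
  have hUint : ∀ j, j ≤ N → Integrable (U j) μ := fun j hj => hUintAux (N - j) j hj le_rfl
  intro n hn
  constructor
  · -- Part 1: lower bound over all martingales
    intro M hM hM2
    have hne : (Finset.Icc n N).Nonempty := Finset.nonempty_Icc.mpr hn
    set Y : Ω → ℝ := fun ω => (Finset.Icc n N).sup' hne (fun j => Z j ω - (M j ω - M n ω))
      with hYdef
    have hMint : ∀ k, Integrable (M k) μ := fun k => hM.integrable k
    have hYint : Integrable Y μ :=
      integrable_finset_sup' hne (fun i _ => (hZint i).sub ((hMint i).sub (hMint n)))
    have hYmeas : StronglyMeasurable[ℱ N] Y := by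
      refine stronglyMeasurable_finset_sup' hne (fun i hi => ?_)
      simp only [Finset.mem_Icc] at hi
      exact ((hZadapted.stronglyAdapted i).mono (ℱ.mono hi.2)).sub
        (((hM.stronglyAdapted i).mono (ℱ.mono hi.2)).sub
          ((hM.stronglyAdapted n).mono (ℱ.mono (le_trans hi.1 hi.2))))
    have hterm : ∀ j, n ≤ j → j ≤ N → ∀ ω, Z j ω - (M j ω - M n ω) ≤ Y ω := by
      intro j h1 h2 ω
      exact Finset.le_sup' (fun j => Z j ω - (M j ω - M n ω)) (Finset.mem_Icc.mpr ⟨h1, h2⟩)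
    have key : ∀ d j, n ≤ j → j + d = N →
        U j ≤ᵐ[μ] fun ω => (μ[Y|ℱ j]) ω + (M j ω - M n ω) := by
      intro d
      induction d with
      | zero =>
        intro j hjn hjN
        have hjN' : j = N := by omega
        rw [hjN']
        have hYe : μ[Y|ℱ N] = Y := condExp_of_stronglyMeasurable (ℱ.le N) hYmeas hYint
        rw [hYe]
        refine Filter.Eventually.of_forall fun ω => ?_
        rw [hUN ω]
        have := hterm N hn le_rfl ω
        show Z N ω ≤ Y ω + (M N ω - M n ω)
        linarith
      | succ d ih =>
        intro j hjn hjN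
        have hjN' : j < N := by omega
        have ihj := ih (j + 1) (by omega) (by omega)
        -- Z j part: Z j - (M j - M n) is ℱ j measurable and ≤ Y
        have hZmeas : StronglyMeasurable[ℱ j] (fun ω => Z j ω - (M j ω - M n ω)) :=
          (hZadapted.stronglyAdapted j).sub ((hM.stronglyAdapted j).sub ((hM.stronglyAdapted n).mono (ℱ.mono hjn)))
        have hZint' : Integrable (fun ω => Z j ω - (M j ω - M n ω)) μ :=
          (hZint j).sub ((hMint j).sub (hMint n))
        have z1 : (fun ω => Z j ω - (M j ω - M n ω)) ≤ᵐ[μ] μ[Y|ℱ j] := by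
          have h2 : μ[(fun ω => Z j ω - (M j ω - M n ω))|ℱ j] ≤ᵐ[μ] μ[Y|ℱ j] :=
            condExp_mono hZint' hYint
              (Filter.Eventually.of_forall (fun ω => hterm j hjn hjN'.le ω))
          rwa [condExp_of_stronglyMeasurable (ℱ.le j) hZmeas hZint'] at h2
        -- conditional expectation step
        have step : μ[U (j + 1)|ℱ j]
            ≤ᵐ[μ] μ[(fun ω => (μ[Y|ℱ (j + 1)]) ω + (M (j + 1) ω - M n ω))|ℱ j] :=
          condExp_mono (hUint (j + 1) (by omega))
            (integrable_condExp.add ((hMint _).sub (hMint n))) ihj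
        have t0 : μ[(fun ω => (μ[Y|ℱ (j + 1)]) ω + (M (j + 1) ω - M n ω))|ℱ j]
            =ᵐ[μ] μ[μ[Y|ℱ (j + 1)]|ℱ j] + μ[(fun ω => M (j + 1) ω - M n ω)|ℱ j] :=
          condExp_add integrable_condExp ((hMint _).sub (hMint n)) _
        have t1 : μ[μ[Y|ℱ (j + 1)]|ℱ j] =ᵐ[μ] μ[Y|ℱ j] :=
          condExp_condExp_of_le (ℱ.mono (Nat.le_succ j)) (ℱ.le (j + 1))
        have t2 : μ[(fun ω => M (j + 1) ω - M n ω)|ℱ j]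
            =ᵐ[μ] μ[M (j + 1)|ℱ j] - μ[M n|ℱ j] :=
          condExp_sub (hMint _) (hMint n) _
        have t3 : μ[M (j + 1)|ℱ j] =ᵐ[μ] M j := hM.condExp_ae_eq (Nat.le_succ j)
        have t4 : μ[M n|ℱ j] = M n :=
          condExp_of_stronglyMeasurable (ℱ.le j) ((hM.stronglyAdapted n).mono (ℱ.mono hjn))
            (hMint n)
        filter_upwards [step, t0, t1, t2, t3, z1] with ω hstep ht0 ht1 ht2 ht3 hz1
        have ht4 : (μ[M n|ℱ j]) ω = M n ω := by rw [t4]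
        simp only [Pi.add_apply, Pi.sub_apply] at ht0 ht1 ht2 ht3 hz1 hstep
        rw [hUrec j hjN' ω]
        refine max_le (by linarith) (by linarith)
    have final := key (N - n) n le_rfl (by omega)
    filter_upwards [final] with ω hω
    simpa using hω
  · -- Part 2: attainment by the Doob martingale
    have haeD : ∀ᵐ ω ∂μ, ∀ j, U j ω = U 0 ω + Mstar j ω - A j ω := ae_all_iff.2 hDoob
    have haeI : ∀ᵐ ω ∂μ, ∀ j,
        Mstar (j + 1) ω - Mstar j ω = U (j + 1) ω - (μ[U (j + 1)|ℱ j]) ω :=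
      ae_all_iff.2 hMinc
    have haeA : ∀ᵐ ω ∂μ, ∀ j, A j ω ≤ A (j + 1) ω := ae_all_iff.2 hAmono
    filter_upwards [haeD, haeI, haeA] with ω hD hI hA
    have hAinc : ∀ j, A (j + 1) ω - A j ω = U j ω - (μ[U (j + 1)|ℱ j]) ω := by
      intro j
      have d1 := hD j; have d2 := hD (j + 1); have i1 := hI j
      linarith
    have hAmono' : ∀ p q, p ≤ q → A p ω ≤ A q ω := by
      intro p q h
      induction q, h using Nat.le_induction with
      | base => exact le_refl _
      | succ q hq ih => exact le_trans ih (hA q)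
    have hle : ∀ j ∈ Finset.Icc n N, Z j ω - (Mstar j ω - Mstar n ω) ≤ U n ω := by
      intro j hj
      rw [Finset.mem_Icc] at hj
      have hz := hZleU j hj.2 ω
      have d1 := hD j; have d2 := hD n
      have := hAmono' n j hj.1
      linarith
    have hex : ∃ j, n ≤ j ∧ j ≤ N ∧ Z j ω = U j ω := ⟨N, hn, le_rfl, (hUN ω).symm⟩
    obtain ⟨hj0n, hj0N, hj0Z⟩ := Nat.find_spec hex
    set j0 := Nat.find hex with hj0def
    have hAj0 : ∀ k, n ≤ k → k ≤ j0 → A k ω = A n ω := by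
      intro k
      induction k with
      | zero =>
        intro hk1 hk2
        have hn0 : n = 0 := by omega
        rw [hn0]
      | succ k ih =>
        intro hk1 hk2
        rcases eq_or_lt_of_le hk1 with h | h
        · rw [← h]
        · have hkn : n ≤ k := by omega
          have hkj0 : k < j0 := by omega
          have hknot := Nat.find_min hex hkj0
          push_neg at hknot
          have hkN : k ≤ N := by omega
          have hkN' : k < N := by omega
          have hZne : Z k ω ≠ U k ω := hknot hkn hkN
          have hZlt : Z k ω < U k ω := lt_of_le_of_ne (hZleU k hkN ω) hZne
          have hUk : U k ω = (μ[U (k + 1)|ℱ k]) ω := by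
            have := hUrec k hkN' ω
            rcases max_cases (Z k ω) ((μ[U (k + 1)|ℱ k]) ω) with ⟨h1, h2⟩ | ⟨h1, h2⟩
            · rw [this, h1] at hZlt; exact absurd rfl (ne_of_lt hZlt)
            · rw [this, h1]
          have := hAinc k
          have hik := ih hkn (le_of_lt hkj0)
          linarith
    have hterm0 : Z j0 ω - (Mstar j0 ω - Mstar n ω) = U n ω := by
      have d1 := hD j0; have d2 := hD n
      have hAeq := hAj0 j0 hj0n le_rfl
      rw [hj0Z]
      linarith
    refine le_antisymm (Finset.sup'_le _ _ hle) ?_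
    rw [← hterm0]
    exact Finset.le_sup' (fun j => Z j ω - (Mstar j ω - Mstar n ω))
      (Finset.mem_Icc.mpr ⟨hj0n, hj0N⟩)
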